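/- Let n be a positive integer, ζ ∈ k a primitive n-th root of unity, and m, t positive divisors of n. Let A = k[u]/(u^n − 1), let σ be the k-algebra automorphism of A with σ(u) = ζ·u, and let δ: A → A be a k-linear map with δ(1_A) = 0, δ(ab) = σ^m(a)δ(b) + δ(a)b for all a, b ∈ A, σ∘δ = ζ^t·(δ∘σ), and δ(u) ≠ 0. Then there exists a nonzero γ ∈ k such that for all integers p, s > 0: δ(u^p) = γ·(p)_{ζ^m}·u^{p+t} and δ^s(u^p) = γ^s·(∏_{i=0}^{s−1} (p + it)_{ζ^m})·u^{p+st}, where exponents of u are taken modulo n. In particular, for N = n/gcd(n, mt), one has δ^N(u^p) = 0 if and only if n/m divides p + it for some 0 ≤ i < N. -/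

import Mathlib

/-! The automorphism `σ` is diagonal in the basis `uⁱ` with pairwise distinct eigenvalues `ζⁱ`, and
the commutation rule makes `δ u` an eigenvector for `ζ^(1+t)`; hence `δ u = γ u^(1+t)`. The twisted
Leibniz rule `δ(u^(p+1)) = ζ^m u δ(u^p) + δ(u) u^p` then gives `δ(u^p) = γ (p)_{ζ^m} u^(p+t)` by
induction, and iterating gives the product formula. As `ζ^m` is a primitive `n/m`-th root of
unity, `(s)_{ζ^m}` vanishes exactly when `n/m ∣ s`, provided `ζ^m ≠ 1`; and `ζ^m = 1` is impossible,
since then `0 = δ(uⁿ) = nγ u^(n+t)`. -/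

def qSym {k : Type*} [Field k] (w : k) (s : ℕ) : k := ∑ i ∈ Finset.range s, w ^ i

open Finset

section QSymbol

variable {k : Type*} [Field k]

theorem qSym_succ (w : k) (s : ℕ) : qSym w (s + 1) = w * qSym w s + 1 :=
  geom_sum_succ

theorem qSym_one (s : ℕ) : qSym (1 : k) s = s := by
  simp [qSym]

theorem qSym_eq_zero_iff {w : k} {d : ℕ} (hw : IsPrimitiveRoot w d) (hw1 : w ≠ 1) (s : ℕ) :
    qSym w s = 0 ↔ d ∣ s := by
  rw [qSym, geom_sum_eq hw1, div_eq_zero_iff, sub_eq_zero, sub_eq_zero, or_iff_left hw1,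
    hw.pow_eq_one_iff_dvd]

end QSymbol

theorem Module.Basis.eq_repr_smul_of_apply_eq_smul {ι k M : Type*} [Field k] [AddCommGroup M]
    [Module k M] (b : Module.Basis ι k M) {f : M →ₗ[k] M} {e : ι → k} (he : Function.Injective e)
    (hf : ∀ i, f (b i) = e i • b i) {x : M} {j : ι} (hx : f x = e j • x) :
    x = b.repr x j • b j := by
  classical
  have hrepr : ∀ y i, b.repr (f y) i = e i * b.repr y i := by
    intro y i
    suffices (Finsupp.lapply i ∘ₗ b.repr.toLinearMap) ∘ₗ f =
        e i • (Finsupp.lapply i ∘ₗ b.repr.toLinearMap) from LinearMap.congr_fun this y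
    refine b.ext fun l => ?_
    by_cases hl : l = i <;> simp [hf, hl]
  have hsupp : b.repr x = Finsupp.single j (b.repr x j) := by
    ext i
    by_cases hij : i = j
    · subst hij; simp
    · have hi : e i * b.repr x i = e j * b.repr x i := by
        rw [← hrepr, hx, map_smul, Finsupp.smul_apply, smul_eq_mul]
      rw [Finsupp.single_eq_of_ne hij]
      by_contra hc
      exact he.ne hij (mul_right_cancel₀ hc hi)
  apply b.repr.injective
  rw [map_smul, b.repr_self, Finsupp.smul_single_one]
  exact hsupp

section TwistedDerivation

variable {k A : Type*} [Field k] [CommRing A] [Algebra k A] {τ : A → A} {δ : A →ₗ[k] A}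

theorem map_one_eq_zero_of_twisted_leibniz (hτ1 : τ 1 = 1)
    (hleib : ∀ a c : A, δ (a * c) = τ a * δ c + δ a * c) : δ 1 = 0 := by
  have h := hleib 1 1
  rw [one_mul, hτ1, one_mul, mul_one] at h
  simpa using h

theorem twisted_map_pow (hleib : ∀ a c : A, δ (a * c) = τ a * δ c + δ a * c) (hδ1 : δ 1 = 0)
    {u : A} {w γ : k} {t : ℕ} (hτu : τ u = w • u) (hδu : δ u = γ • u ^ (1 + t)) (p : ℕ) :
    δ (u ^ p) = (γ * qSym w p) • u ^ (p + t) := by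
  induction p with
  | zero => simp [qSym, hδ1]
  | succ p ih =>
    rw [pow_succ', hleib, ih, hτu, hδu, smul_mul_smul_comm, smul_mul_assoc, ← pow_succ',
      ← pow_add, qSym_succ, show p + t + 1 = p + 1 + t by omega,
      show 1 + t + p = p + 1 + t by omega, ← add_smul]
    ring_nf

theorem pow_apply_pow_eq_smul {u : A} {γ : k} {t : ℕ} {f : ℕ → k}
    (h : ∀ p, δ (u ^ p) = (γ * f p) • u ^ (p + t)) (p s : ℕ) :
    (δ ^ s) (u ^ p) = (γ ^ s * ∏ i ∈ range s, f (p + i * t)) • u ^ (p + s * t) := by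
  induction s with
  | zero => simp
  | succ s ih =>
    rw [pow_succ', Module.End.mul_apply, ih, map_smul, h, smul_smul, prod_range_succ,
      show p + s * t + t = p + (s + 1) * t by ring]
    ring_nf

theorem ne_one_of_map_pow_eq_smul {u : A} {w γ : k} {n t : ℕ} (hu : u ^ n = 1) (hn : (n : k) ≠ 0)
    (hδ1 : δ 1 = 0) (hγ : γ ≠ 0) (hun : u ^ (n + t) ≠ 0)
    (h : ∀ p, δ (u ^ p) = (γ * qSym w p) • u ^ (p + t)) : w ≠ 1 := by
  rintro rfl
  have h0 := h n
  rw [hu, hδ1, qSym_one] at h0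
  exact smul_ne_zero (mul_ne_zero hγ hn) hun h0.symm

end TwistedDerivation

theorem AlgEquiv.pow_apply_eq_smul_of_apply_eq_smul {R A : Type*} [CommSemiring R] [Semiring A]
    [Algebra R A] (σ : A ≃ₐ[R] A) {u : A} {c : R} (hσu : σ u = c • u) (j : ℕ) :
    (σ ^ j) u = c ^ j • u := by
  induction j with
  | zero => simp
  | succ j ih => rw [pow_succ', AlgEquiv.mul_apply, ih, map_smul, hσu, smul_smul, pow_succ]

section CyclicAlgebra

variable {k A : Type*} [Field k] [CommRing A] [Algebra k A] {n : ℕ} {u : A}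

theorem pow_ne_zero_of_basis (b : Module.Basis (Fin n) k A)
    (hb : ∀ i : Fin n, b i = u ^ (i : ℕ)) (hn : 0 < n) (hu : u ^ n = 1) (a : ℕ) : u ^ a ≠ 0 := by
  rw [pow_eq_pow_mod a hu, ← hb ⟨a % n, Nat.mod_lt a hn⟩]
  exact b.ne_zero _

theorem exists_eq_smul_pow_of_apply_eq_smul (b : Module.Basis (Fin n) k A)
    (hb : ∀ i : Fin n, b i = u ^ (i : ℕ)) (hn : 0 < n) {ζ : k} (hζ : IsPrimitiveRoot ζ n)
    (hu : u ^ n = 1) {σ : A →ₐ[k] A} (hσu : σ u = ζ • u) {x : A} {j : ℕ}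
    (hx : σ x = ζ ^ j • x) : ∃ c : k, x = c • u ^ j := by
  let r : Fin n := ⟨j % n, Nat.mod_lt _ hn⟩
  refine ⟨b.repr x r, ?_⟩
  rw [pow_eq_pow_mod j hu, ← hb r]
  refine b.eq_repr_smul_of_apply_eq_smul (f := σ.toLinearMap) (e := fun i => ζ ^ (i : ℕ))
    (fun i i' h => Fin.ext (hζ.pow_inj i.isLt i'.isLt h)) (fun i => ?_) ?_
  · rw [hb, AlgHom.toLinearMap_apply, map_pow, hσu, smul_pow]
  · rw [AlgHom.toLinearMap_apply, hx, pow_eq_pow_mod _ hζ.pow_eq_one]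

end CyclicAlgebra

theorem stmt_7 (k : Type*) [Field k]
    (n : ℕ) (hn : 0 < n) (ζ : k) (hζ : IsPrimitiveRoot ζ n)
    (m t : ℕ) (hmn : m ∣ n)
    (A : Type*) [CommRing A] [Algebra k A]
    (u : A) (b : Module.Basis (Fin n) k A) (hb : ∀ i : Fin n, b i = u ^ (i : ℕ))
    (hu : u ^ n = 1)
    (σ : A ≃ₐ[k] A) (δ : A →ₗ[k] A)
    (hσu : σ u = ζ • u)
    (hleib : ∀ a c : A, δ (a * c) = (σ ^ m) a * δ c + δ a * c)
    (hcomm : σ.toLinearMap ∘ₗ δ = ζ ^ t • (δ ∘ₗ σ.toLinearMap))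
    (hδu : δ u ≠ 0) :
    ∃ γ : k, γ ≠ 0 ∧
      (∀ p : ℕ, 0 < p → δ (u ^ p) = (γ * qSym (ζ ^ m) p) • u ^ (p + t)) ∧
      (∀ p s : ℕ, 0 < p → 0 < s →
        (δ ^ s) (u ^ p) =
          (γ ^ s * ∏ i ∈ Finset.range s, qSym (ζ ^ m) (p + i * t)) • u ^ (p + s * t)) ∧
      (∀ p : ℕ, 0 < p →
        ((δ ^ (n / Nat.gcd n (m * t))) (u ^ p) = 0 ↔
          ∃ i < n / Nat.gcd n (m * t), (n / m) ∣ (p + i * t))) := by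
  have hu_ne_zero := pow_ne_zero_of_basis b hb hn hu
  have hσδu : σ (δ u) = ζ ^ (1 + t) • δ u := by
    have h := LinearMap.congr_fun hcomm u
    simp only [LinearMap.comp_apply, LinearMap.smul_apply, AlgEquiv.toLinearMap_apply, hσu,
      map_smul] at h
    rw [h, smul_smul, pow_add, pow_one, mul_comm]
  obtain ⟨γ, hγu⟩ := exists_eq_smul_pow_of_apply_eq_smul b hb hn hζ hu
    (σ := σ.toAlgHom) hσu hσδu
  have hγ : γ ≠ 0 := by
    rintro rfl
    exact hδu (by simpa using hγu)
  have hδ1 := map_one_eq_zero_of_twisted_leibniz (map_one _) hleib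
  have hδpow := twisted_map_pow hleib hδ1 (σ.pow_apply_eq_smul_of_apply_eq_smul hσu m) hγu
  have hw : IsPrimitiveRoot (ζ ^ m) (n / m) := hζ.pow hn (Nat.mul_div_cancel' hmn).symm
  have : NeZero n := ⟨hn.ne'⟩
  have hw1 := ne_one_of_map_pow_eq_smul hu hζ.neZero'.out hδ1 hγ (hu_ne_zero _) hδpow
  refine ⟨γ, hγ, fun p _ => hδpow p, fun p s _ _ => pow_apply_pow_eq_smul hδpow p s,
    fun p _ => ?_⟩
  rw [pow_apply_pow_eq_smul hδpow, smul_eq_zero, or_iff_left (hu_ne_zero _), mul_eq_zero,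
    or_iff_right (pow_ne_zero _ hγ), prod_eq_zero_iff]
  simp only [mem_range, qSym_eq_zero_iff hw hw1]
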